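/- For p ≥ 3 and all s > 0, one has (p + 2(p−1)·r(s)²)·s·r'(s) − (1 + 2 r(s)²)·r(s) ≥ 0; moreover, for all s > 0 one has s·r'(s) − (1 + 2 r(s)²)·r(s) < 0. -/

import Mathlib

lemma aux_sqrt_pos (x : ℝ) : 0 < Real.sqrt (1 + 2 * x ^ 2) :=
  Real.sqrt_pos.2 (by positivity)

lemma aux_sq (x : ℝ) : Real.sqrt (1 + 2 * x ^ 2) ^ 2 = 1 + 2 * x ^ 2 :=
  Real.sq_sqrt (by positivity)

lemma aux_inner (x : ℝ) : HasDerivAt (fun x : ℝ => 1 + 2 * x ^ 2) (4 * x) x := by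
  have h := ((hasDerivAt_pow 2 x).const_mul 2).const_add 1
  refine h.congr_deriv ?_
  ring

lemma aux_sqrt_deriv (x : ℝ) :
    HasDerivAt (fun x : ℝ => Real.sqrt (1 + 2 * x ^ 2))
      (2 * x / Real.sqrt (1 + 2 * x ^ 2)) x := by
  have h := (aux_inner x).sqrt (by positivity)
  refine h.congr_deriv ?_
  have := aux_sqrt_pos x
  field_simp
  ring

lemma aux_K (x : ℝ) :
    HasDerivAt (fun x : ℝ => x * (1 + x ^ 2) / Real.sqrt (1 + 2 * x ^ 2))
      ((1 + 3 * x ^ 2 + 4 * x ^ 4) * Real.sqrt (1 + 2 * x ^ 2) / (1 + 2 * x ^ 2) ^ 2) x := by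
  have hnum : HasDerivAt (fun x : ℝ => x * (1 + x ^ 2)) (1 + 3 * x ^ 2) x := by
    have h := (hasDerivAt_id' (𝕜 := ℝ) (x := x)).mul ((hasDerivAt_pow 2 x).const_add 1)
    refine h.congr_deriv ?_
    ring
  have h := hnum.div (aux_sqrt_deriv x) (ne_of_gt (aux_sqrt_pos x))
  refine h.congr_deriv ?_
  have hqpos := aux_sqrt_pos x
  have hq := aux_sq x
  set q := Real.sqrt (1 + 2 * x ^ 2) with hqdef
  rw [← hq]
  field_simp
  linear_combination (3*x^2+1) * hq

lemma aux_M (x : ℝ) :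
    HasDerivAt (fun x : ℝ => x * Real.sqrt (1 + 2 * x ^ 2))
      ((1 + 4 * x ^ 2) / Real.sqrt (1 + 2 * x ^ 2)) x := by
  have h := (hasDerivAt_id' (𝕜 := ℝ) (x := x)).mul (aux_sqrt_deriv x)
  refine h.congr_deriv ?_
  have hqpos := aux_sqrt_pos x
  have hq := aux_sq x
  set q := Real.sqrt (1 + 2 * x ^ 2) with hqdef
  field_simp
  linear_combination 1 * hq

/-- For `p ≥ 3` and `s > 0`, `(p + 2(p-1)r(s)²)·s·r'(s) - (1 + 2r(s)²)·r(s) ≥ 0`;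
moreover, for all `s > 0`, `s·r'(s) - (1 + 2r(s)²)·r(s) < 0`
(here `r'(s) = 1/√(1 + 2 r(s)²)`). -/
theorem sign_conditions (r : ℝ → ℝ) (hr0 : r 0 = 0)
    (hr' : ∀ s : ℝ, HasDerivAt r ((Real.sqrt (1 + 2 * r s ^ 2))⁻¹) s)
    (p : ℝ) (hp : 3 ≤ p) :
    (∀ s : ℝ, 0 < s →
      0 ≤ (p + 2 * (p - 1) * r s ^ 2) * (s * (Real.sqrt (1 + 2 * r s ^ 2))⁻¹)
          - (1 + 2 * r s ^ 2) * r s) ∧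
    (∀ s : ℝ, 0 < s →
      s * (Real.sqrt (1 + 2 * r s ^ 2))⁻¹ - (1 + 2 * r s ^ 2) * r s < 0) := by
  -- r is strictly monotone, hence positive on (0, ∞)
  have hrpos : ∀ s : ℝ, 0 < s → 0 < r s := by
    intro s hs
    have hm : StrictMono r := by
      apply strictMono_of_deriv_pos
      intro x
      rw [(hr' x).deriv]
      exact inv_pos.2 (aux_sqrt_pos (r x))
    have := hm hs
    rwa [hr0] at this
  -- lower bound : r(1+r²)/√(1+2r²) ≤ s for s ≥ 0
  have hK_le : ∀ s : ℝ, 0 ≤ s →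
      r s * (1 + r s ^ 2) / Real.sqrt (1 + 2 * r s ^ 2) ≤ s := by
    have hψ' : ∀ s, HasDerivAt
        (fun s => s - r s * (1 + r s ^ 2) / Real.sqrt (1 + 2 * r s ^ 2))
        (1 - (1 + 3 * r s ^ 2 + 4 * r s ^ 4) / (1 + 2 * r s ^ 2) ^ 2) s := by
      intro s
      have hc := (aux_K (r s)).comp s (hr' s)
      have h := (hasDerivAt_id' (𝕜 := ℝ) (x := s)).sub hc
      refine h.congr_deriv ?_
      have hqpos := aux_sqrt_pos (r s)
      have hq := aux_sq (r s)
      set q := Real.sqrt (1 + 2 * r s ^ 2) with hqdef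
      rw [← hq]
      field_simp
    have hmono : Monotone (fun s => s - r s * (1 + r s ^ 2) / Real.sqrt (1 + 2 * r s ^ 2)) := by
      apply monotone_of_deriv_nonneg
      · exact fun s => (hψ' s).differentiableAt
      · intro s
        rw [(hψ' s).deriv]
        have h1 : (0:ℝ) < (1 + 2 * r s ^ 2) ^ 2 := by positivity
        rw [sub_nonneg, div_le_one h1]
        nlinarith [sq_nonneg (r s), sq_nonneg (r s ^ 2)]
    intro s hs
    have h0 := hmono hs
    simp only [hr0] at h0
    norm_num at h0
    linarith
  -- upper bound : s ≤ r √(1+2r²) for s ≥ 0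
  have hM_ge : ∀ s : ℝ, 0 ≤ s → s ≤ r s * Real.sqrt (1 + 2 * r s ^ 2) := by
    have hχ' : ∀ s, HasDerivAt
        (fun s => r s * Real.sqrt (1 + 2 * r s ^ 2) - s)
        ((1 + 4 * r s ^ 2) / (1 + 2 * r s ^ 2) - 1) s := by
      intro s
      have hc := (aux_M (r s)).comp s (hr' s)
      have h := hc.sub (hasDerivAt_id' (𝕜 := ℝ) (x := s))
      refine h.congr_deriv ?_
      have hqpos := aux_sqrt_pos (r s)
      have hq := aux_sq (r s)
      set q := Real.sqrt (1 + 2 * r s ^ 2) with hqdef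
      rw [← hq]
      field_simp
    have hmono : Monotone (fun s => r s * Real.sqrt (1 + 2 * r s ^ 2) - s) := by
      apply monotone_of_deriv_nonneg
      · exact fun s => (hχ' s).differentiableAt
      · intro s
        rw [(hχ' s).deriv]
        have h1 : (0:ℝ) < 1 + 2 * r s ^ 2 := by positivity
        rw [sub_nonneg, le_div_iff₀ h1]
        nlinarith [sq_nonneg (r s)]
    intro s hs
    have h0 := hmono hs
    simp only [hr0] at h0
    norm_num at h0
    linarith
  constructor
  · intro s hs
    have hu := hrpos s hs
    have hqpos := aux_sqrt_pos (r s)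
    have hq := aux_sq (r s)
    have hle := hK_le s hs.le
    set u := r s with hu'
    set q := Real.sqrt (1 + 2 * u ^ 2) with hqdef
    have hs' : u * (1 + u ^ 2) ≤ s * q := (div_le_iff₀ hqpos).1 hle
    rw [sub_nonneg]
    have heq : (p + 2 * (p - 1) * u ^ 2) * (s * q⁻¹) = ((p + 2 * (p - 1) * u ^ 2) * s) / q := by
      field_simp
    rw [heq, le_div_iff₀ hqpos]
    have h4 : (3 + 4 * u ^ 2) * (s * q) ≤ (p + 2 * (p - 1) * u ^ 2) * (s * q) := by
      apply mul_le_mul_of_nonneg_right _ (mul_nonneg hs.le hqpos.le)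
      nlinarith [sq_nonneg u]
    have h1 : (3 + 4 * u ^ 2) * (u * (1 + u ^ 2)) ≤ (3 + 4 * u ^ 2) * (s * q) :=
      mul_le_mul_of_nonneg_left hs' (by positivity)
    have h2 : (1 + 2 * u ^ 2) ^ 2 * u ≤ (3 + 4 * u ^ 2) * (u * (1 + u ^ 2)) := by
      nlinarith [hu.le, sq_nonneg u]
    nlinarith [h1, h2, h4, hq]
  · intro s hs
    have hu := hrpos s hs
    have hqpos := aux_sqrt_pos (r s)
    have hq := aux_sq (r s)
    have hge := hM_ge s hs.le
    set u := r s with hu'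
    set q := Real.sqrt (1 + 2 * u ^ 2) with hqdef
    rw [sub_neg]
    have heq : s * q⁻¹ = s / q := by ring
    rw [heq, div_lt_iff₀ hqpos]
    nlinarith [hge, mul_pos (mul_pos hu hu) (mul_pos hu hqpos)]
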